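/- arXiv:1902.00962 — 6 statements merged into one kernel-verified Lean document; each statement's English description precedes it below -/
import Mathlib

section
/- Let (X,r) be a nondegenerate braided set and let G = G(X,r) be its associated group. Then the assignment x ↦ σ_x extends to a group homomorphism: there exists a group homomorphism φ : G → Sym(X) (the group of permutations of X) such that φ(ι(x)) = σ_x for every x ∈ X. -/
/-- The left action `σ_x(y)`: first component of `r (x, y)`. -/
def sig {X : Type*} (r : X × X → X × X) (x y : X) : X := (r (x, y)).1

/-- The right action `τ_y(x)`: second component of `r (x, y)`. -/
def tau {X : Type*} (r : X × X → X × X) (y x : X) : X := (r (x, y)).2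

/-- `r¹² = r × id`. -/
def r12 {X : Type*} (r : X × X → X × X) : X × X × X → X × X × X :=
  fun t => ((r (t.1, t.2.1)).1, (r (t.1, t.2.1)).2, t.2.2)

/-- `r²³ = id × r`. -/
def r23 {X : Type*} (r : X × X → X × X) : X × X × X → X × X × X :=
  fun t => (t.1, (r (t.2.1, t.2.2)).1, (r (t.2.1, t.2.2)).2)

/-- The braid relation `r¹² ∘ r²³ ∘ r¹² = r²³ ∘ r¹² ∘ r²³`. -/
def IsBraided {X : Type*} (r : X × X → X × X) : Prop :=
  r12 r ∘ r23 r ∘ r12 r = r23 r ∘ r12 r ∘ r23 r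

/-- Nondegeneracy: every `σ_x` and every `τ_y` is bijective. -/
def Nondegenerate {X : Type*} (r : X × X → X × X) : Prop :=
  (∀ x, Function.Bijective (sig r x)) ∧ (∀ y, Function.Bijective (tau r y))

/-- The defining relators of the group `G(X,r)`:
`x · y · (σ_x(y) · τ_y(x))⁻¹` for all `x, y ∈ X`. -/
def ybRels {X : Type*} (r : X × X → X × X) : Set (FreeGroup X) :=
  { w | ∃ x y : X, w = FreeGroup.of x * FreeGroup.of y *
      (FreeGroup.of (sig r x y) * FreeGroup.of (tau r y x))⁻¹ }

/-- The group `G(X,r)` associated with `(X,r)`, presented by generators `X`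
and relations `x y = σ_x(y) τ_y(x)`. -/
abbrev YBGroup {X : Type*} (r : X × X → X × X) := PresentedGroup (ybRels r)

/-- The canonical map `ι : X → G(X,r)`. -/
def ybι {X : Type*} (r : X × X → X × X) : X → YBGroup r := PresentedGroup.of

/-- For a nondegenerate braided set `(X,r)`, the assignment
`x ↦ σ_x` extends to a group homomorphism `φ : G(X,r) →* Sym(X)` with
`φ(ι(x)) = σ_x` for all `x ∈ X`. -/
theorem exists_hom_to_symmetricGroup {X : Type*} (r : X × X → X × X)
    (hbij : Function.Bijective r) (hnd : Nondegenerate r) (hbr : IsBraided r) :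
    ∃ φ : YBGroup r →* Equiv.Perm X, ∀ x y : X, φ (ybι r x) y = sig r x y := by
  classical
  -- key identity from braiding: σ_x (σ_y z) = σ_{σ_x y} (σ_{τ_y x} z)
  have key : ∀ x y z : X, sig r x (sig r y z)
      = sig r (sig r x y) (sig r (tau r y x) z) := by
    intro x y z
    have h := congrArg (fun f => (f (x, y, z)).1) hbr
    simpa [r12, r23, sig, tau, Function.comp] using h.symm
  set f : X → Equiv.Perm X := fun x => Equiv.ofBijective _ (hnd.1 x) with hf
  have hrel : ∀ w ∈ ybRels r, FreeGroup.lift f w = 1 := by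
    rintro w ⟨x, y, rfl⟩
    simp only [map_mul, map_inv, FreeGroup.lift_apply_of]
    rw [mul_inv_eq_one]
    ext z
    simp [hf, Equiv.ofBijective, key x y z]
  refine ⟨PresentedGroup.toGroup hrel, fun x y => ?_⟩
  have := PresentedGroup.toGroup.of (f := f) hrel (x := x)
  rw [ybι, this]
  rfl
end

section
/- Every square-free solution (X,r) satisfies condition lri: for all x, y ∈ X one has τ_x(σ_x(y)) = y and σ_x(τ_x(y)) = y; that is, τ_x = σ_x^{-1} for every x ∈ X. -/
/-- Every square-free solution `(X,r)` satisfies condition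
**lri**: `τ_x(σ_x(y)) = y` and `σ_x(τ_x(y)) = y` for all `x, y ∈ X`;
that is, `τ_x = σ_x⁻¹`. -/
theorem squareFree_lri {X : Type*} (r : X × X → X × X)
    (hnd : Nondegenerate r) (hinv : Function.Involutive r) (hbr : IsBraided r)
    (hsf : ∀ x : X, r (x, x) = (x, x)) :
    ∀ x y : X, tau r x (sig r x y) = y ∧ sig r x (tau r x y) = y := by
  have hσinj : ∀ a : X, Function.Injective (sig r a) := fun a => (hnd.1 a).injective
  -- fixed point lemma: σ_a b = a implies b = a
  have fix : ∀ a b : X, sig r a b = a → b = a := by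
    intro a b h
    apply hσinj a
    have : sig r a a = a := by simp [sig, hsf a]
    rw [h, this]
  -- condition (B): τ_{σ_a b}(a) = τ_b(a), from the braid relation at (a,a,b)
  have hB : ∀ a b : X, tau r (sig r a b) a = tau r b a := by
    intro a b
    have h := congrFun hbr (a, a, b)
    simp only [Function.comp_apply, r12, r23, hsf a] at h
    have h2 := congrArg (fun t : X × X × X => t.2.1) h
    simp only at h2
    -- h2 : (r (a, (r (a,b)).1)).2 = (r ((r (a,(r (a,b)).1)).2, (r (a,b)).2)).1
    have := fix ((r (a, (r (a,b)).1)).2) ((r (a,b)).2) h2.symm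
    simpa [tau, sig] using this.symm
  have h1 : ∀ x y : X, tau r x (sig r x y) = y := by
    intro x y
    set u := sig r x y with hu
    set v := tau r y x with hv
    have hr : r (x, y) = (u, v) := by
      apply Prod.ext <;> simp [hu, hv, sig, tau]
    have hinv' : r (u, v) = (x, y) := by rw [← hr]; exact hinv (x, y)
    have hx : sig r u v = x := by simp [sig, hinv']
    have := hB u v
    rw [hx] at this
    rw [this]
    simp [tau, hinv']
  intro x y
  refine ⟨h1 x y, ?_⟩
  obtain ⟨z, hz⟩ := (hnd.1 x).surjective y
  rw [← hz, h1 x z]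
end

section
/- Let (X,r) be a square-free solution with |X| = n finite and cyclic degree p, and let F_p be the subgroup of G = G(X,r) generated by {ι(x)^p : x ∈ X}. Then F_p is a free abelian group of rank n with free basis {ι(x)^p : x ∈ X}: F_p is commutative, and every element W of F_p can be written uniquely as W = ∏_{x ∈ X} ι(x)^{p·k(x)} for a function k : X → ℤ. -/
section Aux
variable {X : Type*} {r : X × X → X × X}

lemma r_eq (x y : X) : r (x, y) = (sig r x y, tau r y x) := rfl

lemma inv_sig (hinv : Function.Involutive r) (x y : X) :
    sig r (sig r x y) (tau r y x) = x := by
  have h : r (sig r x y, tau r y x) = (x, y) := by rw [← r_eq]; exact hinv (x, y)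
  simpa [sig] using congrArg Prod.fst h

lemma braid_sig (hbr : IsBraided r) (x y z : X) :
    sig r (sig r x y) (sig r (tau r y x) z) = sig r x (sig r y z) := by
  have h := congrFun hbr (x, y, z)
  simpa [r12, r23, Function.comp, sig, tau] using congrArg (fun t => t.1) h

lemma sig_self (hsf : ∀ x : X, r (x, x) = (x, x)) (x : X) : sig r x x = x := by
  simp [sig, hsf]

lemma tau_self (hsf : ∀ x : X, r (x, x) = (x, x)) (x : X) : tau r x x = x := by
  simp [tau, hsf]

lemma cc (hnd : Nondegenerate r) (hbr : IsBraided r)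
    (hsf : ∀ x : X, r (x, x) = (x, x)) (x y : X) :
    tau r (sig r x y) x = tau r y x := by
  have h := congrFun hbr (x, x, y)
  have h2 := congrArg (fun t : X × X × X => t.2.1) h
  simp only [r12, r23, Function.comp, hsf x] at h2
  have h2' : tau r (sig r x y) x = sig r (tau r (sig r x y) x) (tau r y x) := h2
  have h3 : sig r (tau r (sig r x y) x) (tau r y x)
      = sig r (tau r (sig r x y) x) (tau r (sig r x y) x) := by
    rw [sig_self hsf]; exact h2'.symm
  exact ((hnd.1 _).injective h3).symm

lemma lri (hnd : Nondegenerate r) (hinv : Function.Involutive r) (hbr : IsBraided r)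
    (hsf : ∀ x : X, r (x, x) = (x, x)) (y a : X) :
    sig r y (tau r y a) = a := by
  obtain ⟨y', hy'⟩ := (hnd.1 a).surjective y
  have h1 := inv_sig hinv a y'
  have h2 := cc hnd hbr hsf a y'
  rw [hy'] at h1 h2
  rw [h2]; exact h1

lemma tau_iter_id (hnd : Nondegenerate r) (hinv : Function.Involutive r) (hbr : IsBraided r)
    (hsf : ∀ x : X, r (x, x) = (x, x)) {p : ℕ} (hpord : ∀ x : X, (sig r x)^[p] = id) (y : X) :
    (tau r y)^[p] = id := by
  have hst : ∀ m : ℕ, ∀ a, (sig r y)^[m] ((tau r y)^[m] a) = a := by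
    intro m
    induction m with
    | zero => intro a; rfl
    | succ m ih =>
      intro a
      rw [Function.iterate_succ_apply (tau r y) m a,
        Function.iterate_succ_apply' (sig r y) m, ih (tau r y a)]
      exact lri hnd hinv hbr hsf y a
  funext a
  have h := hst p a
  rw [hpord y] at h
  simpa using h

end Aux

section GroupSide
variable {X : Type*} {r : X × X → X × X}

lemma grel (x y : X) :
    ybι r x * ybι r y = ybι r (sig r x y) * ybι r (tau r y x) := by
  have hmem : (FreeGroup.of x * FreeGroup.of y *
      (FreeGroup.of (sig r x y) * FreeGroup.of (tau r y x))⁻¹) ∈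
      Subgroup.normalClosure (ybRels r) :=
    Subgroup.subset_normalClosure ⟨x, y, rfl⟩
  have h1 : (PresentedGroup.mk (ybRels r)) (FreeGroup.of x * FreeGroup.of y *
      (FreeGroup.of (sig r x y) * FreeGroup.of (tau r y x))⁻¹) = 1 :=
    (QuotientGroup.eq_one_iff _).mpr hmem
  rw [map_mul, map_inv, map_mul, mul_inv_eq_one] at h1
  exact h1

lemma pow_mul_of (hnd : Nondegenerate r) (hbr : IsBraided r)
    (hsf : ∀ x : X, r (x, x) = (x, x)) (x : X) : ∀ (m : ℕ) (y : X),
    ybι r x ^ m * ybι r y = ybι r ((sig r x)^[m] y) * ybι r (tau r y x) ^ m := by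
  intro m
  induction m with
  | zero => intro y; simp
  | succ m ih =>
    intro y
    calc ybι r x ^ (m + 1) * ybι r y
        = ybι r x ^ m * (ybι r x * ybι r y) := by rw [pow_succ, mul_assoc]
      _ = ybι r x ^ m * (ybι r (sig r x y) * ybι r (tau r y x)) := by rw [grel]
      _ = (ybι r x ^ m * ybι r (sig r x y)) * ybι r (tau r y x) := by rw [mul_assoc]
      _ = (ybι r ((sig r x)^[m] (sig r x y)) * ybι r (tau r (sig r x y) x) ^ m)
            * ybι r (tau r y x) := by rw [ih]
      _ = ybι r ((sig r x)^[m + 1] y) * ybι r (tau r y x) ^ (m + 1) := by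
            rw [cc hnd hbr hsf, ← Function.iterate_succ_apply, mul_assoc, ← pow_succ]

lemma pow_p_mul (hnd : Nondegenerate r) (hbr : IsBraided r)
    (hsf : ∀ x : X, r (x, x) = (x, x)) {p : ℕ} (hpord : ∀ x : X, (sig r x)^[p] = id) :
    ∀ (m : ℕ) (x y : X),
    ybι r x ^ p * ybι r y ^ m = ybι r y ^ m * ybι r ((tau r y)^[m] x) ^ p := by
  intro m
  induction m with
  | zero => intro x y; simp
  | succ m ih =>
    intro x y
    calc ybι r x ^ p * ybι r y ^ (m + 1)
        = (ybι r x ^ p * ybι r y) * ybι r y ^ m := by rw [pow_succ', mul_assoc]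
      _ = (ybι r ((sig r x)^[p] y) * ybι r (tau r y x) ^ p) * ybι r y ^ m := by
            rw [pow_mul_of hnd hbr hsf]
      _ = ybι r y * (ybι r (tau r y x) ^ p * ybι r y ^ m) := by
            rw [hpord x]; simp [mul_assoc]
      _ = ybι r y * (ybι r y ^ m * ybι r ((tau r y)^[m] (tau r y x)) ^ p) := by
            rw [ih (tau r y x) y]
      _ = ybι r y ^ (m + 1) * ybι r ((tau r y)^[m + 1] x) ^ p := by
            rw [← Function.iterate_succ_apply, ← mul_assoc, ← pow_succ']

lemma commute_pow_p (hnd : Nondegenerate r) (hinv : Function.Involutive r)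
    (hbr : IsBraided r) (hsf : ∀ x : X, r (x, x) = (x, x)) {p : ℕ}
    (hpord : ∀ x : X, (sig r x)^[p] = id) (x y : X) :
    Commute (ybι r x ^ p) (ybι r y ^ p) := by
  have h := pow_p_mul hnd hbr hsf hpord p x y
  rw [tau_iter_id hnd hinv hbr hsf hpord y] at h
  simpa [Commute, SemiconjBy] using h

end GroupSide

section Lists
variable {G : Type*} [Group G]

lemma zpow_p_mul (p : ℕ) (a : G) (m : ℤ) : a ^ ((p : ℤ) * m) = (a ^ p) ^ m := by
  rw [zpow_mul, zpow_natCast]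

lemma ofFn_prod_add : ∀ {n : ℕ} (a : Fin n → G),
    (∀ i j, Commute (a i) (a j)) → ∀ (k l : Fin n → ℤ),
    (List.ofFn fun i => a i ^ (k i + l i)).prod
      = (List.ofFn fun i => a i ^ k i).prod * (List.ofFn fun i => a i ^ l i).prod := by
  intro n
  induction n with
  | zero => intro a _ k l; simp
  | succ n ih =>
    intro a hc k l
    simp only [List.ofFn_succ, List.prod_cons]
    have hih := ih (fun i => a i.succ) (fun i j => hc _ _)
      (fun i => k i.succ) (fun i => l i.succ)
    rw [hih]
    have hcm : Commute (a 0 ^ l 0)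
        (List.ofFn fun i : Fin n => a i.succ ^ k i.succ).prod := by
      apply Commute.list_prod_right
      intro g hg
      rw [List.mem_ofFn] at hg
      obtain ⟨i, rfl⟩ := hg
      exact (hc 0 i.succ).zpow_zpow _ _
    rw [zpow_add, mul_assoc (a 0 ^ k 0), ← mul_assoc (a 0 ^ l 0), hcm.eq,
      mul_assoc, mul_assoc, ← mul_assoc (a 0 ^ k 0)]

lemma ofFn_prod_single : ∀ {n : ℕ} (a : Fin n → G) (j : Fin n) (m : ℤ),
    (List.ofFn fun i => a i ^ (if i = j then m else 0)).prod = a j ^ m := by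
  intro n
  induction n with
  | zero => intro a j m; exact absurd j.2 (by omega)
  | succ n ih =>
    intro a j m
    rcases Fin.eq_zero_or_eq_succ j with hj | ⟨j', rfl⟩
    · subst hj
      simp only [List.ofFn_succ, List.prod_cons]
      have : (List.ofFn fun i : Fin n => a i.succ ^ (if i.succ = 0 then m else 0)).prod = 1 := by
        apply List.prod_eq_one
        intro g hg
        rw [List.mem_ofFn] at hg
        obtain ⟨i, rfl⟩ := hg
        simp [Fin.succ_ne_zero]
      rw [this, mul_one]
      simp
    · simp only [List.ofFn_succ, List.prod_cons, Fin.succ_inj]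
      have h0 : ((0 : Fin (n+1)) = j'.succ) = False := by
        simp [(Fin.succ_ne_zero j').symm, eq_comm]
      rw [if_neg (by simp [eq_comm, Fin.succ_ne_zero]), zpow_zero, one_mul]
      exact ih (fun i => a i.succ) j' m

end Lists

section PermSide
variable {X : Type*} {r : X × X → X × X}

noncomputable def sigE (hnd : Nondegenerate r) (x : X) : Equiv.Perm X :=
  Equiv.ofBijective (sig r x) (hnd.1 x)

@[simp] lemma sigE_apply (hnd : Nondegenerate r) (x y : X) :
    sigE hnd x y = sig r x y := rfl

def Ev [DecidableEq X] (x : X) : X → ℤ := fun z => if z = x then 1 else 0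

noncomputable def Ax [DecidableEq X] (hnd : Nondegenerate r) (x : X) :
    Equiv.Perm (X → ℤ) where
  toFun v := Ev x + v ∘ (sigE hnd x).symm
  invFun w := (w - Ev x) ∘ (sigE hnd x)
  left_inv v := by
    funext z
    simp only [Function.comp, Pi.add_apply, Pi.sub_apply]
    rw [Equiv.symm_apply_apply]
    ring
  right_inv w := by
    funext z
    simp only [Function.comp, Pi.add_apply, Pi.sub_apply]
    rw [Equiv.apply_symm_apply]
    ring

lemma Ax_apply [DecidableEq X] (hnd : Nondegenerate r) (x : X) (v : X → ℤ) (z : X) :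
    Ax hnd x v z = Ev x z + v ((sigE hnd x).symm z) := rfl

lemma Ev_symm [DecidableEq X] (e : Equiv.Perm X) (y z : X) :
    Ev y (e.symm z) = Ev (e y) z := by
  have h : (e.symm z = y) = (z = e y) := by
    apply propext; constructor
    · intro h; rw [← h, Equiv.apply_symm_apply]
    · intro h; rw [h, Equiv.symm_apply_apply]
  simp only [Ev, h]

lemma Ax_rel [DecidableEq X] (hnd : Nondegenerate r) (hinv : Function.Involutive r)
    (hbr : IsBraided r) (x y : X) :
    Ax hnd x * Ax hnd y = Ax hnd (sig r x y) * Ax hnd (tau r y x) := by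
  have hperm : sigE hnd (sig r x y) * sigE hnd (tau r y x) = sigE hnd x * sigE hnd y := by
    apply Equiv.ext
    intro w
    simpa using braid_sig hbr x y w
  apply Equiv.ext
  intro v
  funext z
  rw [Equiv.Perm.mul_apply, Equiv.Perm.mul_apply, Ax_apply, Ax_apply, Ax_apply, Ax_apply]
  rw [Ev_symm (sigE hnd x) y z, Ev_symm (sigE hnd (sig r x y)) (tau r y x) z]
  have h1 : sigE hnd x y = sig r x y := rfl
  have h2 : sigE hnd (sig r x y) (tau r y x) = x := inv_sig hinv x y
  rw [h1, h2]
  have h3 : (sigE hnd y).symm ((sigE hnd x).symm z)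
      = (sigE hnd (tau r y x)).symm ((sigE hnd (sig r x y)).symm z) := by
    have := congrArg (fun q : Equiv.Perm X => q⁻¹ z) hperm
    simpa [Equiv.Perm.inv_def] using this.symm
  rw [h3]
  ring

noncomputable def psiHom [DecidableEq X] (hnd : Nondegenerate r)
    (hinv : Function.Involutive r) (hbr : IsBraided r) :
    YBGroup r →* Equiv.Perm (X → ℤ) :=
  PresentedGroup.toGroup (f := fun x => Ax hnd x) (by
    rintro w ⟨x, y, rfl⟩
    simp only [map_mul, map_inv, FreeGroup.lift_apply_of]
    rw [mul_inv_eq_one]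
    exact Ax_rel hnd hinv hbr x y)

@[simp] lemma psiHom_of [DecidableEq X] (hnd : Nondegenerate r)
    (hinv : Function.Involutive r) (hbr : IsBraided r) (x : X) :
    psiHom hnd hinv hbr (ybι r x) = Ax hnd x :=
  PresentedGroup.toGroup.of _

lemma Ax_pow [DecidableEq X] (hnd : Nondegenerate r)
    (hsf : ∀ x : X, r (x, x) = (x, x)) (x : X) :
    ∀ (m : ℕ) (v : X → ℤ) (z : X),
    ((Ax hnd x) ^ m) v z = (m : ℤ) * Ev x z + v (((sigE hnd x).symm)^[m] z) := by
  intro m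
  induction m with
  | zero => intro v z; simp
  | succ m ih =>
    intro v z
    rw [pow_succ', Equiv.Perm.mul_apply, Ax_apply]
    rw [ih v ((sigE hnd x).symm z)]
    have hx : (sigE hnd x).symm x = x := by
      rw [Equiv.symm_apply_eq]
      exact (sig_self hsf x).symm
    have hEv : Ev x ((sigE hnd x).symm z) = Ev x z := by
      rw [Ev_symm (sigE hnd x) x z, sigE_apply, sig_self hsf]
    rw [hEv, ← Function.iterate_succ_apply]
    push_cast
    ring

lemma Ax_pow_p [DecidableEq X] (hnd : Nondegenerate r)
    (hsf : ∀ x : X, r (x, x) = (x, x)) {p : ℕ}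
    (hpord : ∀ x : X, (sig r x)^[p] = id) (x : X) :
    (Ax hnd x) ^ p = Equiv.addLeft ((p : ℤ) • Ev x) := by
  have hiter : ((sigE hnd x).symm)^[p] = id := by
    have h1 : (sigE hnd x) ^ p = 1 := by
      apply Equiv.ext
      intro w
      exact congrFun (hpord x) w
    have h2 : ((sigE hnd x)⁻¹) ^ p = 1 := by
      rw [inv_pow, h1, inv_one]
    funext w
    have h3 : (⇑((sigE hnd x)⁻¹))^[p] w = w := by
      rw [← Equiv.Perm.coe_pow, h2]; rfl
    exact h3
  apply Equiv.ext
  intro v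
  funext z
  rw [Ax_pow hnd hsf x p v z, hiter]
  simp only [id_eq, Equiv.coe_addLeft, Pi.add_apply, Pi.smul_apply, smul_eq_mul]

end PermSide

lemma ofFn_prod_addLeft {V : Type*} [AddGroup V] :
    ∀ {n : ℕ} (a : Fin n → V),
    (List.ofFn fun i => Equiv.addLeft (a i)).prod = Equiv.addLeft ((List.ofFn a).sum) := by
  intro n
  induction n with
  | zero => simp
  | succ n ih =>
    intro a
    simp only [List.ofFn_succ, List.prod_cons, List.sum_cons]
    rw [ih (fun i => a i.succ)]
    simp

/-- For a finite square-free solution `(X,r)` of order `n`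
with cyclic degree `p`, the subgroup `F_p ≤ G(X,r)` generated by
`{ι(x)^p : x ∈ X}` is free abelian of rank `n` with free basis
`{ι(x)^p : x ∈ X}`: it is commutative, and (for any enumeration of `X`)
every `W ∈ F_p` is uniquely of the form `∏_{x∈X} ι(x)^{p·k(x)}`, `k : X → ℤ`. -/
theorem Fp_free_abelian {X : Type*} [Fintype X] (r : X × X → X × X)
    (hnd : Nondegenerate r) (hinv : Function.Involutive r) (hbr : IsBraided r)
    (hsf : ∀ x : X, r (x, x) = (x, x)) (p : ℕ) (hp : 0 < p)
    (hpord : ∀ x : X, (sig r x)^[p] = id)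
    (hpmin : ∀ q : ℕ, 0 < q → (∀ x : X, (sig r x)^[q] = id) → p ≤ q) :
    (∀ a ∈ Subgroup.closure (Set.range fun x : X => ybι r x ^ p),
      ∀ b ∈ Subgroup.closure (Set.range fun x : X => ybι r x ^ p), a * b = b * a) ∧
    ∀ e : Fin (Fintype.card X) ≃ X,
      ∀ W ∈ Subgroup.closure (Set.range fun x : X => ybι r x ^ p),
        ∃! k : X → ℤ,
          W = (List.ofFn fun i => ybι r (e i) ^ ((p : ℤ) * k (e i))).prod := by
  classical
  set n := Fintype.card X with hn
  set c : X → YBGroup r := fun x => ybι r x ^ p with hc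
  have hcomm : ∀ x y : X, Commute (c x) (c y) :=
    fun x y => commute_pow_p hnd hinv hbr hsf hpord x y
  set P : (Fin n ≃ X) → (X → ℤ) → YBGroup r :=
    fun e k => (List.ofFn fun i => ybι r (e i) ^ ((p : ℤ) * k (e i))).prod with hPdef
  have hP : ∀ (e : Fin n ≃ X) (k : X → ℤ),
      P e k = (List.ofFn fun i => (c (e i)) ^ (k (e i))).prod := by
    intro e k
    simp only [hPdef, hc, zpow_p_mul]
  have hadd : ∀ (e : Fin n ≃ X) (k l : X → ℤ), P e k * P e l = P e (k + l) := by
    intro e k l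
    rw [hP, hP, hP]
    have := ofFn_prod_add (fun i => c (e i)) (fun i j => hcomm _ _)
      (fun i => k (e i)) (fun i => l (e i))
    simpa using this.symm
  have hzero : ∀ e : Fin n ≃ X, P e 0 = 1 := by
    intro e
    rw [hP]
    apply List.prod_eq_one
    intro g hg
    rw [List.mem_ofFn] at hg
    obtain ⟨i, rfl⟩ := hg
    simp
  have hinvP : ∀ (e : Fin n ≃ X) (k : X → ℤ), (P e k)⁻¹ = P e (-k) := by
    intro e k
    have : P e k * P e (-k) = 1 := by rw [hadd]; simpa using hzero e
    exact (eq_inv_of_mul_eq_one_right this).symm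
  have hgen : ∀ (e : Fin n ≃ X) (x : X),
      P e (fun z => if z = x then (1 : ℤ) else 0) = c x := by
    intro e x
    have h1 := hP e (fun z => if z = x then (1:ℤ) else 0)
    rw [h1]
    have hlist : (List.ofFn fun i => c (e i) ^ (if (e i : X) = x then (1:ℤ) else 0))
        = List.ofFn fun i => c (e i) ^ (if i = e.symm x then (1:ℤ) else 0) := by
      apply congrArg List.ofFn
      funext i
      by_cases h : i = e.symm x
      · subst h; simp
      · rw [if_neg h, if_neg (fun hh => h (by rw [← hh, Equiv.symm_apply_apply]))]
    rw [hlist, ofFn_prod_single (fun i => c (e i)) (e.symm x) 1]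
    simp
  have hexist : ∀ (e : Fin n ≃ X), ∀ W ∈ Subgroup.closure
      (Set.range fun x : X => ybι r x ^ p), ∃ k : X → ℤ, W = P e k := by
    intro e W hW
    refine Subgroup.closure_induction ?_ ?_ ?_ ?_ hW
    · rintro w ⟨x, rfl⟩
      exact ⟨(fun z => if z = x then 1 else 0), (hgen e x).symm⟩
    · exact ⟨0, (hzero e).symm⟩
    · rintro a b _ _ ⟨k, rfl⟩ ⟨l, rfl⟩
      exact ⟨k + l, hadd e k l⟩
    · rintro a _ ⟨k, rfl⟩
      exact ⟨-k, hinvP e k⟩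
  -- injectivity via the permutation representation
  set ψ : YBGroup r →* Equiv.Perm (X → ℤ) := psiHom hnd hinv hbr with hψ
  have hfac : ∀ (x : X) (m : ℤ), ψ (ybι r x ^ ((p : ℤ) * m))
      = Equiv.addLeft (m • ((p : ℤ) • Ev x)) := by
    intro x m
    rw [zpow_p_mul, map_zpow, map_pow, hψ, psiHom_of, Ax_pow_p hnd hsf hpord]
    simp
  have hpsi : ∀ (e : Fin n ≃ X) (k : X → ℤ), ψ (P e k)
      = Equiv.addLeft ((List.ofFn fun i => (k (e i)) • ((p : ℤ) • Ev (e i))).sum) := by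
    intro e k
    rw [hPdef]
    simp only
    rw [map_list_prod, List.map_ofFn]
    have : (fun i => ψ (ybι r (e i) ^ ((p:ℤ) * k (e i))))
        = fun i : Fin n => Equiv.addLeft ((k (e i)) • ((p : ℤ) • Ev (e i))) := by
      funext i; exact hfac (e i) (k (e i))
    calc (List.ofFn (ψ ∘ fun i => ybι r (e i) ^ ((p:ℤ) * k (e i)))).prod
        = (List.ofFn fun i : Fin n =>
            Equiv.addLeft ((k (e i)) • ((p : ℤ) • Ev (e i)))).prod := by
          apply congrArg List.prod
          apply congrArg List.ofFn
          funext i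
          exact hfac (e i) (k (e i))
      _ = _ := ofFn_prod_addLeft _
  have hsum : ∀ (e : Fin n ≃ X) (k : X → ℤ) (z : X),
      (List.ofFn fun i => (k (e i)) • ((p : ℤ) • Ev (e i))).sum z = (p : ℤ) * k z := by
    intro e k z
    rw [Fin.sum_ofFn]
    rw [Finset.sum_apply]
    have hterm : ∀ i : Fin n, ((k (e i)) • ((p : ℤ) • Ev (e i))) z
        = (if e.symm z = i then (p : ℤ) * k (e i) else 0) := by
      intro i
      simp only [Pi.smul_apply, smul_eq_mul, Ev]
      by_cases h : e.symm z = i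
      · rw [if_pos h, if_pos (by rw [← h, Equiv.apply_symm_apply]), mul_one]
        ring
      · rw [if_neg h, if_neg (fun hh => h (by rw [hh, Equiv.symm_apply_apply])), mul_zero,
          mul_zero]
    rw [Finset.sum_congr rfl (fun i _ => hterm i), Finset.sum_ite_eq]
    simp
  have hinj : ∀ (e : Fin n ≃ X) (k l : X → ℤ), P e k = P e l → k = l := by
    intro e k l h
    have h2 := congrArg ψ h
    rw [hpsi e k, hpsi e l] at h2
    have h3 := congrArg (fun q : Equiv.Perm (X → ℤ) => q 0) h2
    simp only [Equiv.coe_addLeft, add_zero] at h3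
    funext z
    have h4 := congrFun h3 z
    rw [hsum e k z, hsum e l z] at h4
    have hp' : (p : ℤ) ≠ 0 := by exact_mod_cast hp.ne'
    exact mul_left_cancel₀ hp' h4
  constructor
  · intro a ha b hb
    set e : Fin n ≃ X := (Fintype.equivFin X).symm
    obtain ⟨k, rfl⟩ := hexist e a ha
    obtain ⟨l, rfl⟩ := hexist e b hb
    rw [hadd e k l, hadd e l k, add_comm]
  · intro e W hW
    obtain ⟨k, rfl⟩ := hexist e W hW
    refine ⟨k, rfl, ?_⟩
    intro y hy
    exact hinj e y k hy.symm
end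

section
/- Let (X,r) be a square-free solution of finite order |X| = n with cyclic degree p, let G = G(X,r), and let F_p be the subgroup of G generated by {ι(x)^p : x ∈ X}. Then F_p has index exactly p^n in G. -/
/-!
`G` acts on `(ℤ/p)^X` by the affine maps `ι x • v = e_x + v ∘ σ_x⁻¹` (the braid relation makes
this compatible with the defining relations). Since `σ_x` fixes `x` and `σ_x^p = id`, every
`ι x ^ p` acts trivially; `F_p` is normal because `ι x ^ p * ι y = ι y * ι (τ_y x) ^ p`, so the
orbit map `G ⧸ F_p → (ℤ/p)^X`, `g ↦ g • 0`, is well defined. Its inverse `s` is built by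
recursion, `s v = ι x * s (ι x⁻¹ • v)` for a coordinate `x` with `v x ≠ 0`; this lowers the
weight `∑ (v j).val` by one. That the result does not depend on the pivot is proved by induction
on the weight: two pivots are reconciled through the relation
`ι z * ι y₁ = ι (σ_z y₁) * ι (τ_{y₁} z)`, and the wrap-around `v x = -1` is absorbed by
`ι x ^ p ∈ F_p`.
-/

theorem ZMod.val_sub_one_add_one {n : ℕ} [NeZero n] {a : ZMod n} (ha : a ≠ 0) :
    (a - 1).val + 1 = a.val := by
  have hpos := ZMod.val_pos.mpr ha
  have hlt := ZMod.val_lt a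
  have h1 : (1 : ZMod n).val = 1 := by
    rw [ZMod.val_one_eq_one_mod, Nat.mod_eq_of_lt (by omega)]
  rw [ZMod.val_sub (by omega), h1]
  omega

theorem ZMod.val_add_one_of_add_one_eq_zero {n : ℕ} [NeZero n] {a : ZMod n} (ha : a + 1 = 0) :
    a.val + 1 = n := by
  have hdvd : n ∣ a.val + 1 := by
    rw [← ZMod.natCast_eq_zero_iff, Nat.cast_add_one, ZMod.natCast_zmod_val, ha]
  exact le_antisymm (ZMod.val_lt a) (Nat.le_of_dvd (Nat.succ_pos _) hdvd)

theorem Pi.single_perm_inv_apply {α M : Type*} [DecidableEq α] [Zero M]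
    (e : Equiv.Perm α) (a : α) (m : M) (b : α) :
    (Pi.single a m : α → M) (e⁻¹ b) = (Pi.single (e a) m : α → M) b := by
  simp only [Pi.single_apply, Equiv.Perm.inv_eq_iff_eq]

namespace YangBaxter

variable {X : Type*} {r : X × X → X × X}

section Solution

theorem sig_self (hsf : ∀ x : X, r (x, x) = (x, x)) (x : X) : sig r x x = x :=
  congrArg Prod.fst (hsf x)

theorem sig_sig_tau (hinv : Function.Involutive r) (x y : X) :
    sig r (sig r x y) (tau r y x) = x :=
  congrArg Prod.fst (hinv (x, y))

theorem sig_sig_of_isBraided (hbr : IsBraided r) (x y z : X) :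
    sig r (sig r x y) (sig r (tau r y x) z) = sig r x (sig r y z) :=
  (congrArg Prod.fst (congrFun hbr (x, y, z)) :)

theorem sig_tau (hnd : Nondegenerate r) (hinv : Function.Involutive r) (hbr : IsBraided r)
    (hsf : ∀ x : X, r (x, x) = (x, x)) (x y : X) : sig r y (tau r y x) = x := by
  have h := sig_sig_of_isBraided hbr x y (tau r y x)
  rw [sig_self hsf (tau r y x), sig_sig_tau hinv] at h
  exact (hnd.1 x).1 (h.symm.trans (sig_self hsf x).symm)

theorem tau_sig (hnd : Nondegenerate r) (hinv : Function.Involutive r) (hbr : IsBraided r)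
    (hsf : ∀ x : X, r (x, x) = (x, x)) (x y : X) : tau r (sig r x y) x = tau r y x :=
  (hnd.1 (sig r x y)).1 (by rw [sig_tau hnd hinv hbr hsf, sig_sig_tau hinv])

theorem tau_iterate_sig (hnd : Nondegenerate r) (hinv : Function.Involutive r)
    (hbr : IsBraided r) (hsf : ∀ x : X, r (x, x) = (x, x)) (x y : X) (k : ℕ) :
    tau r ((sig r x)^[k] y) x = tau r y x := by
  induction k with
  | zero => rfl
  | succ k ih => rw [Function.iterate_succ_apply', tau_sig hnd hinv hbr hsf, ih]

end Solution

section Group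

variable (r) in
theorem ybι_mul_ybι (x y : X) :
    ybι r x * ybι r y = ybι r (sig r x y) * ybι r (tau r y x) := by
  have h := PresentedGroup.mk_eq_mk_of_mul_inv_mem (rels := ybRels r) ⟨x, y, rfl⟩
  simp only [map_mul] at h
  exact h

theorem ybι_pow_mul_ybι (hnd : Nondegenerate r) (hinv : Function.Involutive r)
    (hbr : IsBraided r) (hsf : ∀ x : X, r (x, x) = (x, x)) (x y : X) (k : ℕ) :
    ybι r x ^ k * ybι r y = ybι r ((sig r x)^[k] y) * ybι r (tau r y x) ^ k := by
  induction k with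
  | zero => simp
  | succ k ih =>
    rw [pow_succ', mul_assoc, ih, ← mul_assoc, ybι_mul_ybι r x, tau_iterate_sig hnd hinv hbr hsf,
      ← Function.iterate_succ_apply' (sig r x), mul_assoc, ← pow_succ']

variable (r) in
def Fp (p : ℕ) : Subgroup (YBGroup r) :=
  Subgroup.closure (Set.range fun x : X => ybι r x ^ p)

theorem Fp_normal (hnd : Nondegenerate r) (hinv : Function.Involutive r) (hbr : IsBraided r)
    (hsf : ∀ x : X, r (x, x) = (x, x)) {p : ℕ} (hpord : ∀ x : X, (sig r x)^[p] = id) :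
    (Fp r p).Normal := by
  rw [← Subgroup.normalizer_eq_top_iff, eq_top_iff]
  refine le_trans ?_ (Subgroup.normalizer_le_normalizer_closure _)
  rw [← PresentedGroup.closure_range_of, Subgroup.closure_le]
  rintro _ ⟨y, rfl⟩
  have hconj : ∀ x, MulAut.conj (ybι r y) (ybι r (tau r y x) ^ p) = ybι r x ^ p := fun x => by
    have h := ybι_pow_mul_ybι hnd hinv hbr hsf x y p
    rw [hpord, id] at h
    rw [MulAut.conj_apply, ← h, mul_inv_cancel_right]
  rw [SetLike.mem_coe, Subgroup.mem_normalizer_iff_conj_image_eq, ← Set.range_comp,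
    ← (hnd.2 y).2.range_comp]
  exact congrArg Set.range (funext hconj)

theorem mk_ybι_pow_eq_one {p : ℕ} [(Fp r p).Normal] (x : X) :
    (ybι r x : YBGroup r ⧸ Fp r p) ^ p = 1 := by
  rw [← QuotientGroup.mk_pow, QuotientGroup.eq_one_iff]
  exact Subgroup.subset_closure ⟨x, rfl⟩

end Group

section Affine

noncomputable def sigEquiv (hnd : Nondegenerate r) (x : X) : Equiv.Perm X :=
  Equiv.ofBijective (sig r x) (hnd.1 x)

@[simp]
theorem sigEquiv_apply (hnd : Nondegenerate r) (x y : X) : sigEquiv hnd x y = sig r x y :=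
  rfl

theorem sigEquiv_mul_sigEquiv (hnd : Nondegenerate r) (hbr : IsBraided r) (x y : X) :
    sigEquiv hnd x * sigEquiv hnd y = sigEquiv hnd (sig r x y) * sigEquiv hnd (tau r y x) :=
  Equiv.ext fun z => (sig_sig_of_isBraided hbr x y z).symm

variable [DecidableEq X] {p : ℕ}

variable (p) in
noncomputable def affine (hnd : Nondegenerate r) (x : X) : Equiv.Perm (X → ZMod p) :=
  (Equiv.arrowCongr (sigEquiv hnd x) (Equiv.refl _)).trans (Equiv.addLeft (Pi.single x 1))

theorem affine_apply (hnd : Nondegenerate r) (x : X) (v : X → ZMod p) (j : X) :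
    affine p hnd x v j = (Pi.single x 1 : X → ZMod p) j + v ((sigEquiv hnd x)⁻¹ j) :=
  rfl

theorem affine_symm_apply (hnd : Nondegenerate r) (x : X) (v : X → ZMod p) (j : X) :
    (affine p hnd x).symm v j = v (sig r x j) - (Pi.single x 1 : X → ZMod p) (sig r x j) :=
  neg_add_eq_sub _ _

theorem affine_apply_self (hnd : Nondegenerate r) (hsf : ∀ x : X, r (x, x) = (x, x)) (x : X)
    (v : X → ZMod p) : affine p hnd x v x = v x + 1 := by
  rw [affine_apply, Equiv.Perm.inv_eq_iff_eq.mpr (sig_self hsf x).symm, Pi.single_eq_same,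
    add_comm]

theorem affine_symm_apply_self (hnd : Nondegenerate r) (hsf : ∀ x : X, r (x, x) = (x, x)) (x : X)
    (v : X → ZMod p) : (affine p hnd x).symm v x = v x - 1 := by
  rw [affine_symm_apply, sig_self hsf, Pi.single_eq_same]

theorem affine_mul_affine (hnd : Nondegenerate r) (hinv : Function.Involutive r)
    (hbr : IsBraided r) (x y : X) :
    affine p hnd x * affine p hnd y = affine p hnd (sig r x y) * affine p hnd (tau r y x) := by
  ext v j
  have hσ := congrArg (fun f => f⁻¹ j) (sigEquiv_mul_sigEquiv hnd hbr x y)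
  simp only [mul_inv_rev, Equiv.Perm.mul_apply] at hσ
  simp only [Equiv.Perm.mul_apply, affine_apply, hσ, Pi.single_perm_inv_apply, sigEquiv_apply,
    sig_sig_tau hinv]
  exact add_left_comm _ _ _

variable (p) in
noncomputable def affineRep (hnd : Nondegenerate r) (hinv : Function.Involutive r)
    (hbr : IsBraided r) : YBGroup r →* Equiv.Perm (X → ZMod p) :=
  PresentedGroup.toGroup (f := affine p hnd) <| by
    rintro _ ⟨x, y, rfl⟩
    simp only [map_mul, map_inv, FreeGroup.lift_apply_of]
    rw [affine_mul_affine hnd hinv hbr x y, mul_inv_cancel]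

theorem affineRep_ybι (hnd : Nondegenerate r) (hinv : Function.Involutive r) (hbr : IsBraided r)
    (x : X) : affineRep p hnd hinv hbr (ybι r x) = affine p hnd x :=
  PresentedGroup.toGroup.of _

theorem affine_pow_apply (hnd : Nondegenerate r) (hsf : ∀ x : X, r (x, x) = (x, x)) (x : X)
    (k : ℕ) (v : X → ZMod p) (j : X) :
    (affine p hnd x ^ k) v j =
      k • (Pi.single x 1 : X → ZMod p) j + v ((sigEquiv hnd x ^ k)⁻¹ j) := by
  induction k generalizing j with
  | zero => simp
  | succ k ih =>
    rw [pow_succ', Equiv.Perm.mul_apply, affine_apply, ih, Pi.single_perm_inv_apply,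
      sigEquiv_apply, sig_self hsf, pow_succ', mul_inv_rev, Equiv.Perm.mul_apply, succ_nsmul',
      add_assoc]

theorem affine_pow_eq_one (hnd : Nondegenerate r) (hsf : ∀ x : X, r (x, x) = (x, x))
    (hpord : ∀ x : X, (sig r x)^[p] = id) (x : X) : affine p hnd x ^ p = 1 := by
  have hσ : sigEquiv hnd x ^ p = 1 := Equiv.ext fun j => by
    rw [Equiv.Perm.coe_pow]
    exact congrFun (hpord x) j
  ext v j
  rw [affine_pow_apply hnd hsf, hσ, nsmul_eq_mul, ZMod.natCast_self, zero_mul, zero_add]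
  rfl

theorem Fp_le_ker_affineRep (hnd : Nondegenerate r) (hinv : Function.Involutive r)
    (hbr : IsBraided r) (hsf : ∀ x : X, r (x, x) = (x, x)) (hpord : ∀ x : X, (sig r x)^[p] = id) :
    Fp r p ≤ (affineRep p hnd hinv hbr).ker := by
  rw [Fp, Subgroup.closure_le]
  rintro _ ⟨x, rfl⟩
  rw [SetLike.mem_coe, MonoidHom.mem_ker, map_pow, affineRep_ybι, affine_pow_eq_one hnd hsf hpord]

variable (p) in
noncomputable def affineRepQuot (hnd : Nondegenerate r) (hinv : Function.Involutive r)
    (hbr : IsBraided r) (hsf : ∀ x : X, r (x, x) = (x, x)) (hpord : ∀ x : X, (sig r x)^[p] = id)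
    [(Fp r p).Normal] : YBGroup r ⧸ Fp r p →* Equiv.Perm (X → ZMod p) :=
  QuotientGroup.lift (Fp r p) (affineRep p hnd hinv hbr)
    (Fp_le_ker_affineRep hnd hinv hbr hsf hpord)

theorem affineRepQuot_mk (hnd : Nondegenerate r) (hinv : Function.Involutive r)
    (hbr : IsBraided r) (hsf : ∀ x : X, r (x, x) = (x, x)) (hpord : ∀ x : X, (sig r x)^[p] = id)
    [(Fp r p).Normal] (g : YBGroup r) :
    affineRepQuot p hnd hinv hbr hsf hpord g = affineRep p hnd hinv hbr g :=
  QuotientGroup.lift_mk _ _ g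

end Affine

section Coset

variable [Fintype X] [DecidableEq X] {p : ℕ}

def weight (v : X → ZMod p) : ℕ :=
  ∑ j, (v j).val

theorem weight_affine_symm [NeZero p] (hnd : Nondegenerate r) {x : X} {v : X → ZMod p}
    (hv : v x ≠ 0) : weight ((affine p hnd x).symm v) + 1 = weight v := by
  have hperm : weight ((affine p hnd x).symm v) = weight (v - Pi.single x 1) := by
    simp only [weight, affine_symm_apply]
    exact Equiv.sum_comp (sigEquiv hnd x) fun j => ((v - (Pi.single x 1 : X → ZMod p)) j).val
  rw [hperm, weight, weight, ← Finset.add_sum_erase _ _ (Finset.mem_univ x),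
    ← Finset.add_sum_erase _ _ (Finset.mem_univ x), add_right_comm, Pi.sub_apply,
    Pi.single_eq_same, ZMod.val_sub_one_add_one hv]
  congr 1
  refine Finset.sum_congr rfl fun j hj => ?_
  rw [Pi.sub_apply, Pi.single_eq_of_ne (Finset.ne_of_mem_erase hj), sub_zero]

variable [(Fp r p).Normal]

variable (p) in
/-- The inverse of the orbit map `q ↦ q • 0`. The pivot is an arbitrary nonzero coordinate;
`pivotIndependentBelow` shows that any other one gives the same coset. -/
noncomputable def coset [NeZero p] (hnd : Nondegenerate r) (v : X → ZMod p) : YBGroup r ⧸ Fp r p :=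
  if h : v = 0 then 1 else
    (ybι r (Function.ne_iff.mp h).choose : YBGroup r ⧸ Fp r p) *
      coset hnd ((affine p hnd (Function.ne_iff.mp h).choose).symm v)
termination_by weight v
decreasing_by exact Nat.lt_of_succ_le (weight_affine_symm hnd (Function.ne_iff.mp h).choose_spec).le

variable [NeZero p]

theorem coset_zero (hnd : Nondegenerate r) : coset p hnd (0 : X → ZMod p) = 1 := by
  rw [coset, dif_pos rfl]

theorem exists_coset_eq_mul (hnd : Nondegenerate r) {v : X → ZMod p} (hv : v ≠ 0) :
    ∃ x, v x ≠ 0 ∧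
      coset p hnd v = (ybι r x : YBGroup r ⧸ Fp r p) * coset p hnd ((affine p hnd x).symm v) := by
  refine ⟨_, (Function.ne_iff.mp hv).choose_spec, ?_⟩
  rw [coset, dif_neg hv]

theorem affineRepQuot_coset_apply_zero (hnd : Nondegenerate r) (hinv : Function.Involutive r)
    (hbr : IsBraided r) (hsf : ∀ x : X, r (x, x) = (x, x)) (hpord : ∀ x : X, (sig r x)^[p] = id)
    (v : X → ZMod p) : affineRepQuot p hnd hinv hbr hsf hpord (coset p hnd v) 0 = v := by
  induction hn : weight v using Nat.strong_induction_on generalizing v with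
  | _ n ih =>
  by_cases hv : v = 0
  · rw [hv, coset_zero, map_one, Equiv.Perm.one_apply]
  obtain ⟨x, hx, hcoset⟩ := exists_coset_eq_mul hnd hv
  have hw := weight_affine_symm hnd hx
  rw [hcoset, map_mul, Equiv.Perm.mul_apply, ih _ (by omega) _ rfl, affineRepQuot_mk,
    affineRep_ybι, Equiv.apply_symm_apply]

variable (p) in
def PivotIndependentBelow (hnd : Nondegenerate r) (n : ℕ) : Prop :=
  ∀ v : X → ZMod p, weight v < n → ∀ y, v y ≠ 0 →
    coset p hnd v = (ybι r y : YBGroup r ⧸ Fp r p) * coset p hnd ((affine p hnd y).symm v)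

theorem coset_eq_pow_mul (hnd : Nondegenerate r) (hsf : ∀ x : X, r (x, x) = (x, x)) (x : X) :
    ∀ (k : ℕ) {w : X → ZMod p}, PivotIndependentBelow p hnd (weight w + 1) → k ≤ (w x).val →
      coset p hnd w = (ybι r x : YBGroup r ⧸ Fp r p) ^ k * coset p hnd ((affine p hnd x ^ k)⁻¹ w)
  | 0, w, _, _ => by simp
  | k + 1, w, hPI, hk => by
    have hwx : w x ≠ 0 := ZMod.val_pos.mp (by omega)
    have hw := weight_affine_symm hnd hwx
    have hval := ZMod.val_sub_one_add_one hwx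
    rw [← affine_symm_apply_self hnd hsf x w] at hval
    have hA :
        (affine p hnd x ^ (k + 1))⁻¹ w = (affine p hnd x ^ k)⁻¹ ((affine p hnd x).symm w) := by
      rw [pow_succ', mul_inv_rev, Equiv.Perm.mul_apply]
      rfl
    rw [hPI w (by omega) x hwx,
      coset_eq_pow_mul hnd hsf x k (fun v hv => hPI v (by omega)) (by omega), ← mul_assoc,
      ← pow_succ', hA]

theorem mk_mul_coset_of_pivotIndependentBelow (hnd : Nondegenerate r)
    (hsf : ∀ x : X, r (x, x) = (x, x)) (hpord : ∀ x : X, (sig r x)^[p] = id) {x : X}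
    {w : X → ZMod p} (hPI : PivotIndependentBelow p hnd (weight w + 2)) :
    (ybι r x : YBGroup r ⧸ Fp r p) * coset p hnd w = coset p hnd (affine p hnd x w) := by
  by_cases hwrap : w x + 1 = 0
  · -- `w x = -1`: peeling `x` off `p - 1` times reaches `affine x w`, and `ι x ^ p` is trivial.
    have hk := ZMod.val_add_one_of_add_one_eq_zero hwrap
    have hp : p - 1 + 1 = p := Nat.sub_add_cancel NeZero.one_le
    have hA : (affine p hnd x ^ (p - 1))⁻¹ = affine p hnd x :=
      inv_eq_of_mul_eq_one_left (by rw [← pow_succ', hp, affine_pow_eq_one hnd hsf hpord])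
    rw [coset_eq_pow_mul hnd hsf x (p - 1) (fun v hv => hPI v (by omega)) (by omega), hA,
      ← mul_assoc, ← pow_succ', hp, mk_ybι_pow_eq_one, one_mul]
  · have hx : affine p hnd x w x ≠ 0 := by rwa [affine_apply_self hnd hsf]
    have hw := weight_affine_symm hnd hx
    rw [Equiv.symm_apply_apply] at hw
    rw [hPI _ (by omega) x hx, Equiv.symm_apply_apply]

theorem pivotIndependentBelow (hnd : Nondegenerate r) (hinv : Function.Involutive r)
    (hbr : IsBraided r) (hsf : ∀ x : X, r (x, x) = (x, x)) (hpord : ∀ x : X, (sig r x)^[p] = id)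
    (n : ℕ) : PivotIndependentBelow p hnd n := by
  induction n with
  | zero => exact fun v hv => absurd hv (Nat.not_lt_zero _)
  | succ n ih =>
    intro v hv y hy
    rcases Nat.lt_succ_iff_lt_or_eq.mp hv with hlt | hn
    · exact ih v hlt y hy
    obtain ⟨z, hz, hcoset⟩ := exists_coset_eq_mul hnd (v := v) (fun h => hy (by simp [h]))
    by_cases hzy : z = y
    · exact hzy ▸ hcoset
    -- Peel the chosen pivot `z`, then `y₁ = σ_z⁻¹ y`, and swap `ι z * ι y₁ = ι y * ι (τ_{y₁} z)`.
    obtain ⟨y₁, hy₁⟩ := (hnd.1 z).2 y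
    have ha : (affine p hnd z).symm v y₁ ≠ 0 := by
      rwa [affine_symm_apply, hy₁, Pi.single_eq_of_ne (Ne.symm hzy), sub_zero]
    have hwa := weight_affine_symm hnd hz
    have hwb := weight_affine_symm hnd ha
    have hrel : (ybι r z : YBGroup r ⧸ Fp r p) * ybι r y₁ = ybι r y * ybι r (tau r y₁ z) := by
      rw [← QuotientGroup.mk_mul, ybι_mul_ybι, hy₁, QuotientGroup.mk_mul]
    have hb : affine p hnd (tau r y₁ z) ((affine p hnd y₁).symm ((affine p hnd z).symm v)) =
        (affine p hnd y).symm v := by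
      rw [eq_comm, Equiv.symm_apply_eq, ← Equiv.Perm.mul_apply, ← hy₁,
        ← affine_mul_affine hnd hinv hbr, Equiv.Perm.mul_apply, Equiv.apply_symm_apply,
        Equiv.apply_symm_apply]
    calc coset p hnd v = (ybι r z : YBGroup r ⧸ Fp r p) * coset p hnd ((affine p hnd z).symm v) :=
          hcoset
      _ = ybι r z *
            (ybι r y₁ * coset p hnd ((affine p hnd y₁).symm ((affine p hnd z).symm v))) := by
          rw [ih _ (by omega) y₁ ha]
      _ = ybι r y * (ybι r (tau r y₁ z) *
            coset p hnd ((affine p hnd y₁).symm ((affine p hnd z).symm v))) := by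
          rw [← mul_assoc, hrel, mul_assoc]
      _ = ybι r y * coset p hnd ((affine p hnd y).symm v) := by
          rw [mk_mul_coset_of_pivotIndependentBelow hnd hsf hpord fun u hu => ih u (by omega), hb]

theorem mk_mul_coset (hnd : Nondegenerate r) (hinv : Function.Involutive r) (hbr : IsBraided r)
    (hsf : ∀ x : X, r (x, x) = (x, x)) (hpord : ∀ x : X, (sig r x)^[p] = id) (g : YBGroup r)
    (v : X → ZMod p) :
    (g : YBGroup r ⧸ Fp r p) * coset p hnd v = coset p hnd (affineRep p hnd hinv hbr g v) := by
  have hg : g ∈ Subgroup.closure (Set.range (ybι r)) := by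
    rw [ybι, PresentedGroup.closure_range_of]
    exact Subgroup.mem_top g
  induction hg using Subgroup.closure_induction generalizing v with
  | mem _ hx =>
    obtain ⟨x, rfl⟩ := hx
    rw [affineRep_ybι]
    exact mk_mul_coset_of_pivotIndependentBelow hnd hsf hpord
      (pivotIndependentBelow hnd hinv hbr hsf hpord _)
  | one => rw [QuotientGroup.mk_one, one_mul, map_one, Equiv.Perm.one_apply]
  | mul g h _ _ ihg ihh =>
    rw [QuotientGroup.mk_mul, mul_assoc, ihh, ihg, map_mul, Equiv.Perm.mul_apply]
  | inv g _ ihg =>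
    rw [QuotientGroup.mk_inv, inv_mul_eq_iff_eq_mul, ihg, map_inv, ← Equiv.Perm.mul_apply,
      mul_inv_cancel, Equiv.Perm.one_apply]

theorem coset_affineRepQuot_apply_zero (hnd : Nondegenerate r) (hinv : Function.Involutive r)
    (hbr : IsBraided r) (hsf : ∀ x : X, r (x, x) = (x, x)) (hpord : ∀ x : X, (sig r x)^[p] = id)
    (q : YBGroup r ⧸ Fp r p) : coset p hnd (affineRepQuot p hnd hinv hbr hsf hpord q 0) = q := by
  induction q using QuotientGroup.induction_on with
  | H g => rw [affineRepQuot_mk, ← mk_mul_coset hnd hinv hbr hsf hpord, coset_zero, mul_one]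

variable (p) in
noncomputable def quotientFpEquiv (hnd : Nondegenerate r) (hinv : Function.Involutive r)
    (hbr : IsBraided r) (hsf : ∀ x : X, r (x, x) = (x, x)) (hpord : ∀ x : X, (sig r x)^[p] = id) :
    YBGroup r ⧸ Fp r p ≃ (X → ZMod p) where
  toFun q := affineRepQuot p hnd hinv hbr hsf hpord q 0
  invFun := coset p hnd
  left_inv := coset_affineRepQuot_apply_zero hnd hinv hbr hsf hpord
  right_inv := affineRepQuot_coset_apply_zero hnd hinv hbr hsf hpord

end Coset

end YangBaxter

theorem Fp_index_general {X : Type*} [Fintype X] (r : X × X → X × X)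
    (hnd : Nondegenerate r) (hinv : Function.Involutive r) (hbr : IsBraided r)
    (hsf : ∀ x : X, r (x, x) = (x, x)) (p : ℕ) (hp : 0 < p)
    (hpord : ∀ x : X, (sig r x)^[p] = id) :
    (Subgroup.closure (Set.range fun x : X => ybι r x ^ p)).index
      = p ^ Fintype.card X := by
  classical
  have : NeZero p := ⟨hp.ne'⟩
  have := YangBaxter.Fp_normal hnd hinv hbr hsf hpord
  change (YangBaxter.Fp r p).index = _
  rw [Subgroup.index, Nat.card_congr (YangBaxter.quotientFpEquiv p hnd hinv hbr hsf hpord),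
    Nat.card_fun, Nat.card_zmod, Nat.card_eq_fintype_card]

/-- For a finite square-free solution `(X,r)` of order `n`
with cyclic degree `p`, the subgroup `F_p ≤ G(X,r)` generated by
`{ι(x)^p : x ∈ X}` has index exactly `p^n` in `G(X,r)`. -/
theorem Fp_index {X : Type*} [Fintype X] (r : X × X → X × X)
    (hnd : Nondegenerate r) (hinv : Function.Involutive r) (hbr : IsBraided r)
    (hsf : ∀ x : X, r (x, x) = (x, x)) (p : ℕ) (hp : 0 < p)
    (hpord : ∀ x : X, (sig r x)^[p] = id)
    (hpmin : ∀ q : ℕ, 0 < q → (∀ x : X, (sig r x)^[q] = id) → p ≤ q) :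
    (Subgroup.closure (Set.range fun x : X => ybι r x ^ p)).index
      = p ^ Fintype.card X :=
  Fp_index_general r hnd hinv hbr hsf p hp hpord
end

section
/- Let (X,r) be a square-free solution of finite order |X| = n with cyclic degree p, let G = G(X,r), and let φ : G → Sym(X) be any group homomorphism with φ(ι(x)) = σ_x for all x ∈ X; let 𝒢 = φ(G) be its image (the permutation group of (X,r)). Then the order of 𝒢 divides p^n. In particular, if p is a prime number, then 𝒢 is a p-group. -/
/-!
Send a word `x₁ ⋯ x_k` to the product of the pairs `(δ_{x_i}, σ_{x_i})` in the wreath product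
`ℕ^X ⋊ Sym X`; call the two components its weight and its permutation. The relation
`x y = σ_x(y) τ_y(x)` preserves both, and since `σ_{σ_x(y)}(τ_y(x)) = x` it moves any letter
counted by the weight to the front of the word; peeling letters off this way shows that the weight
determines the permutation. Square-freeness and `σ_x^p = 1` make the word `x^p` have weight `p δ_x`
and trivial permutation, so the weight modulo `p` still determines the permutation. Hence the
subgroup of `(ℤ/p)^X ⋊ Sym X` generated by the `(δ_x, σ_x)` projects bijectively onto `(ℤ/p)^X`;
it has order `p^n`, and `𝒢` is its image in `Sym X`.
-/

section Words

variable {X : Type*} (σ : X → Equiv.Perm X)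

def wordPerm (l : List X) : Equiv.Perm X := (l.map σ).prod

@[simp] lemma wordPerm_nil : wordPerm σ [] = 1 := rfl

@[simp] lemma wordPerm_cons (x : X) (t : List X) :
    wordPerm σ (x :: t) = σ x * wordPerm σ t := rfl

lemma wordPerm_append (l m : List X) : wordPerm σ (l ++ m) = wordPerm σ l * wordPerm σ m := by
  simp [wordPerm]

lemma wordPerm_replicate (k : ℕ) (x : X) : wordPerm σ (List.replicate k x) = σ x ^ k := by
  simp [wordPerm]

lemma wordPerm_cons_cons (τ : X → X → X) (hmul : ∀ x y, σ x * σ y = σ (σ x y) * σ (τ y x))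
    (x y : X) (t : List X) : wordPerm σ (x :: y :: t) = wordPerm σ (σ x y :: τ y x :: t) := by
  simp only [wordPerm_cons, ← mul_assoc, hmul x y]

variable [DecidableEq X]

lemma single_comp_perm_inv {M : Type*} [Zero M] (π : Equiv.Perm X) (y : X) (a : M) :
    Pi.single y a ∘ ⇑π⁻¹ = Pi.single (π y) a :=
  Pi.single_comp_equiv π⁻¹ y a

/-- `(wordWeight σ l, wordPerm σ l)` is the product of the pairs `(δ_x, σ x)` over the letters
`x` of `l` in `ℕ^X ⋊ Sym X`. -/
def wordWeight : List X → X → ℕ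
  | [] => 0
  | x :: t => Pi.single x 1 + wordWeight t ∘ ⇑(σ x)⁻¹

@[simp] lemma wordWeight_nil : wordWeight σ [] = 0 := rfl

lemma wordWeight_cons (x : X) (t : List X) :
    wordWeight σ (x :: t) = Pi.single x 1 + wordWeight σ t ∘ ⇑(σ x)⁻¹ := rfl

lemma wordWeight_singleton (x : X) : wordWeight σ [x] = Pi.single x 1 := by
  simp [wordWeight_cons]

lemma wordWeight_append (l m : List X) :
    wordWeight σ (l ++ m) = wordWeight σ l + wordWeight σ m ∘ ⇑(wordPerm σ l)⁻¹ := by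
  induction l with
  | nil => ext; simp
  | cons x t ih =>
    simp only [List.cons_append, wordWeight_cons, ih, wordPerm_cons, mul_inv_rev, add_assoc]
    rfl

lemma wordWeight_replicate (hfix : ∀ x, σ x x = x) (k : ℕ) (x : X) :
    wordWeight σ (List.replicate k x) = Pi.single x k := by
  induction k with
  | zero => simp
  | succ k ih =>
    rw [List.replicate_succ, wordWeight_cons, ih, single_comp_perm_inv, hfix, ← Pi.single_add,
      add_comm]

lemma one_le_wordWeight_cons (x : X) (t : List X) : 1 ≤ wordWeight σ (x :: t) x := by
  simp [wordWeight_cons]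

lemma wordWeight_cons_cons (τ : X → X → X) (hmul : ∀ x y, σ x * σ y = σ (σ x y) * σ (τ y x))
    (hinv : ∀ x y, σ (σ x y) (τ y x) = x) (x y : X) (t : List X) :
    wordWeight σ (x :: y :: t) = wordWeight σ (σ x y :: τ y x :: t) := by
  have hpair : wordWeight σ [x, y] = wordWeight σ [σ x y, τ y x] := by
    rw [wordWeight_cons σ x, wordWeight_cons σ (σ x y), wordWeight_singleton,
      wordWeight_singleton, single_comp_perm_inv, single_comp_perm_inv, hinv, add_comm]
  rw [show x :: y :: t = [x, y] ++ t from rfl, show σ x y :: τ y x :: t = [σ x y, τ y x] ++ t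
    from rfl, wordWeight_append, wordWeight_append, hpair, wordPerm_cons_cons σ τ hmul]

lemma exists_cons_of_wordWeight_pos (τ : X → X → X)
    (hmul : ∀ x y, σ x * σ y = σ (σ x y) * σ (τ y x)) (hinv : ∀ x y, σ (σ x y) (τ y x) = x)
    (m : List X) (x : X) (hx : 0 < wordWeight σ m x) :
    ∃ m', wordWeight σ m = wordWeight σ (x :: m') ∧ wordPerm σ m = wordPerm σ (x :: m') := by
  induction m generalizing x with
  | nil => simp at hx
  | cons b t ih =>
    by_cases hxb : x = b
    · exact ⟨t, by rw [hxb], by rw [hxb]⟩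
    set y := (σ b).symm x
    have hy : σ b y = x := (σ b).apply_symm_apply x
    obtain ⟨t', hweight, hperm⟩ := ih y (by simpa [wordWeight_cons, hxb] using hx)
    -- `b y t'` becomes `x (τ y b) t'`
    refine ⟨τ y b :: t', ?_, ?_⟩
    · rw [wordWeight_cons, hweight, ← wordWeight_cons, wordWeight_cons_cons σ τ hmul hinv, hy]
    · rw [wordPerm_cons, hperm, ← wordPerm_cons, wordPerm_cons_cons σ τ hmul, hy]

lemma wordPerm_eq_of_wordWeight_eq (τ : X → X → X)
    (hmul : ∀ x y, σ x * σ y = σ (σ x y) * σ (τ y x)) (hinv : ∀ x y, σ (σ x y) (τ y x) = x)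
    (l m : List X) (h : wordWeight σ l = wordWeight σ m) : wordPerm σ l = wordPerm σ m := by
  induction l generalizing m with
  | nil =>
    cases m with
    | nil => rfl
    | cons b t => simpa [← h] using one_le_wordWeight_cons σ b t
  | cons a t ih =>
    obtain ⟨m', hweight, hperm⟩ := exists_cons_of_wordWeight_pos σ τ hmul hinv m a
      (h ▸ one_le_wordWeight_cons σ a t)
    have htail : wordWeight σ t = wordWeight σ m' := by
      ext z
      simpa [wordWeight_cons] using congrFun (h.trans hweight) (σ a z)
    rw [hperm, wordPerm_cons, wordPerm_cons, ih m' htail]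

lemma exists_wordWeight_eq [Finite X] (hfix : ∀ x, σ x x = x) (c : X → ℕ) :
    ∃ l, wordWeight σ l = c := by
  suffices h : ∀ l, ∃ m, wordWeight σ (l ++ m) = wordWeight σ l + c by simpa using h []
  refine Pi.single_induction (fun c => ∀ l, ∃ m, wordWeight σ (l ++ m) = wordWeight σ l + c) c
    (fun l => ⟨[], by simp⟩) ?_ ?_
  · intro c d hc hd l
    obtain ⟨m₁, h₁⟩ := hc l
    obtain ⟨m₂, h₂⟩ := hd (l ++ m₁)
    exact ⟨m₁ ++ m₂, by rw [← List.append_assoc, h₂, h₁, add_assoc]⟩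
  · intro z k l
    refine ⟨List.replicate k ((wordPerm σ l).symm z), ?_⟩
    rw [wordWeight_append, wordWeight_replicate σ hfix, single_comp_perm_inv,
      Equiv.apply_symm_apply]

lemma exists_wordPerm_eq_one_wordWeight_eq_nsmul [Finite X] {p : ℕ} (hfix : ∀ x, σ x x = x)
    (hper : ∀ x, σ x ^ p = 1) (c : X → ℕ) :
    ∃ w, wordPerm σ w = 1 ∧ wordWeight σ w = p • c := by
  refine Pi.single_induction (fun c => ∃ w, wordPerm σ w = 1 ∧ wordWeight σ w = p • c) c
    ⟨[], rfl, by simp⟩ ?_ ?_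
  · rintro c d ⟨w₁, hperm₁, hweight₁⟩ ⟨w₂, hperm₂, hweight₂⟩
    refine ⟨w₁ ++ w₂, by rw [wordPerm_append, hperm₁, hperm₂, one_mul], ?_⟩
    rw [wordWeight_append, hperm₁, hweight₁, hweight₂, smul_add]
    rfl
  · intro z k
    refine ⟨List.replicate (p * k) z, by rw [wordPerm_replicate, pow_mul, hper, one_pow], ?_⟩
    rw [wordWeight_replicate σ hfix, ← smul_eq_mul, Pi.single_smul]

lemma wordPerm_eq_one_of_dvd_wordWeight [Finite X] (τ : X → X → X)
    (hmul : ∀ x y, σ x * σ y = σ (σ x y) * σ (τ y x)) (hinv : ∀ x y, σ (σ x y) (τ y x) = x)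
    (hfix : ∀ x, σ x x = x) {p : ℕ} (hper : ∀ x, σ x ^ p = 1) (l : List X)
    (hdvd : ∀ z, p ∣ wordWeight σ l z) : wordPerm σ l = 1 := by
  choose c hc using hdvd
  obtain ⟨w, hperm, hweight⟩ := exists_wordPerm_eq_one_wordWeight_eq_nsmul σ hfix hper c
  rw [wordPerm_eq_of_wordWeight_eq σ τ hmul hinv l w (by ext z; simp [hc, hweight]), hperm]

end Words

instance {N G : Type*} [Group N] [Group G] {φ : G →* MulAut N} [Finite N] [Finite G] :
    Finite (N ⋊[φ] G) :=
  Finite.of_equiv _ SemidirectProduct.equivProd.symm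

section Wreath

variable {X : Type*} [DecidableEq X] (σ : X → Equiv.Perm X) (p : ℕ)

def wreathGen (x : X) : (X → Multiplicative (ZMod p)) ⋊[mulAutArrow] Equiv.Perm X :=
  ⟨Pi.mulSingle x (Multiplicative.ofAdd 1), σ x⟩

lemma list_prod_map_wreathGen (l : List X) :
    (l.map (wreathGen σ p)).prod =
      ⟨fun z => Multiplicative.ofAdd (wordWeight σ l z : ZMod p), wordPerm σ l⟩ := by
  induction l with
  | nil => ext <;> simp
  | cons x t ih =>
    rw [List.map_cons, List.prod_cons, ih]
    refine SemidirectProduct.ext (funext fun z => ?_) rfl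
    show (Pi.mulSingle x (Multiplicative.ofAdd 1) : X → Multiplicative (ZMod p)) z *
        Multiplicative.ofAdd (wordWeight σ t ((σ x)⁻¹ z) : ZMod p) =
      Multiplicative.ofAdd (((Pi.single x 1 : X → ℕ) z + wordWeight σ t ((σ x)⁻¹ z) : ℕ) : ZMod p)
    rw [Nat.cast_add, ofAdd_add]
    by_cases hz : z = x <;> simp [hz]

lemma mem_closure_range_wreathGen_iff [Finite X] [NeZero p]
    {s : (X → Multiplicative (ZMod p)) ⋊[mulAutArrow] Equiv.Perm X} :
    s ∈ Subgroup.closure (Set.range (wreathGen σ p)) ↔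
      ∃ l : List X, (l.map (wreathGen σ p)).prod = s := by
  rw [← Subgroup.mem_toSubmonoid, Subgroup.closure_toSubmonoid_of_finite,
    ← FreeMonoid.mrange_lift]
  simp only [MonoidHom.mem_mrange, FreeMonoid.lift_apply]
  exact ⟨fun ⟨w, hw⟩ => ⟨w.toList, hw⟩, fun ⟨l, hl⟩ => ⟨FreeMonoid.ofList l, hl⟩⟩

lemma eq_one_of_mem_closure_range_wreathGen [Finite X] [NeZero p] (τ : X → X → X)
    (hmul : ∀ x y, σ x * σ y = σ (σ x y) * σ (τ y x)) (hinv : ∀ x y, σ (σ x y) (τ y x) = x)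
    (hfix : ∀ x, σ x x = x) (hper : ∀ x, σ x ^ p = 1)
    {s : (X → Multiplicative (ZMod p)) ⋊[mulAutArrow] Equiv.Perm X}
    (hs : s ∈ Subgroup.closure (Set.range (wreathGen σ p))) (hleft : s.left = 1) : s = 1 := by
  obtain ⟨l, rfl⟩ := (mem_closure_range_wreathGen_iff σ p).1 hs
  rw [list_prod_map_wreathGen] at hleft ⊢
  have hdvd : ∀ z, p ∣ wordWeight σ l z := fun z =>
    (ZMod.natCast_eq_zero_iff _ _).1 (by simpa using congrFun hleft z)
  exact SemidirectProduct.ext hleft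
    (wordPerm_eq_one_of_dvd_wordWeight σ τ hmul hinv hfix hper l hdvd)

lemma card_closure_range_wreathGen [Fintype X] [NeZero p] (τ : X → X → X)
    (hmul : ∀ x y, σ x * σ y = σ (σ x y) * σ (τ y x)) (hinv : ∀ x y, σ (σ x y) (τ y x) = x)
    (hfix : ∀ x, σ x x = x) (hper : ∀ x, σ x ^ p = 1) :
    Nat.card (Subgroup.closure (Set.range (wreathGen σ p))) = p ^ Fintype.card X := by
  set S := Subgroup.closure (Set.range (wreathGen σ p))
  have hbij : Function.Bijective (fun s : S => s.1.left) := by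
    constructor
    · intro s t h
      have := eq_one_of_mem_closure_range_wreathGen σ p τ hmul hinv hfix hper
        (mul_mem (inv_mem s.2) t.2)
        (by simp [SemidirectProduct.mul_left, SemidirectProduct.inv_left, h])
      exact Subtype.ext (inv_mul_eq_one.1 this)
    · intro f
      obtain ⟨l, hl⟩ := exists_wordWeight_eq σ hfix (fun z => (Multiplicative.toAdd (f z)).val)
      refine ⟨⟨_, (mem_closure_range_wreathGen_iff σ p).2 ⟨l, rfl⟩⟩, ?_⟩
      simp [list_prod_map_wreathGen, hl]
  rw [Nat.card_congr (Equiv.ofBijective _ hbij)]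
  simp

end Wreath

lemma ybι_mul_ybι {X : Type*} (r : X × X → X × X) (x y : X) :
    ybι r x * ybι r y = ybι r (sig r x y) * ybι r (tau r y x) :=
  PresentedGroup.mk_eq_mk_of_mul_inv_mem ⟨x, y, rfl⟩

lemma sig_sig_tau {X : Type*} {r : X × X → X × X} (hinv : Function.Involutive r) (x y : X) :
    sig r (sig r x y) (tau r y x) = x := by
  simp [sig, tau, hinv (x, y)]

theorem permutation_group_order_general {X : Type*} [Fintype X] (r : X × X → X × X)
    (hinv : Function.Involutive r)
    (hsf : ∀ x : X, r (x, x) = (x, x)) (p : ℕ) (hp : 0 < p)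
    (hpord : ∀ x : X, (sig r x)^[p] = id)
    (φ : YBGroup r →* Equiv.Perm X) (hφ : ∀ x y : X, φ (ybι r x) y = sig r x y) :
    Nat.card φ.range ∣ p ^ Fintype.card X ∧ (p.Prime → IsPGroup p φ.range) := by
  classical
  have : NeZero p := ⟨hp.ne'⟩
  set σ : X → Equiv.Perm X := fun x => φ (ybι r x)
  have hσ : ∀ x, ⇑(σ x) = sig r x := fun x => funext (hφ x)
  have hmul : ∀ x y, σ x * σ y = σ (σ x y) * σ (tau r y x) := fun x y => by
    rw [show σ x y = sig r x y from hφ x y, ← map_mul, ← map_mul, ybι_mul_ybι]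
  have hστ : ∀ x y, σ (σ x y) (tau r y x) = x := fun x y => by
    simp only [hσ, sig_sig_tau hinv]
  have hfix : ∀ x, σ x x = x := fun x => by rw [hσ]; exact congrArg Prod.fst (hsf x)
  have hper : ∀ x, σ x ^ p = 1 := fun x =>
    DFunLike.coe_injective (by rw [Equiv.Perm.coe_pow, hσ, hpord x]; rfl)
  have hrange : φ.range =
      (Subgroup.closure (Set.range (wreathGen σ p))).map SemidirectProduct.rightHom := by
    rw [MonoidHom.range_eq_map, ← PresentedGroup.closure_range_of, MonoidHom.map_closure,
      MonoidHom.map_closure, ← Set.range_comp, ← Set.range_comp]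
    rfl
  have hdvd : Nat.card φ.range ∣ p ^ Fintype.card X := by
    rw [hrange, ← card_closure_range_wreathGen σ p (tau r) hmul hστ hfix hper]
    exact Subgroup.card_map_dvd _ _
  exact ⟨hdvd, fun _ => IsPGroup.of_card_dvd_pow hdvd⟩

/-- For a finite square-free solution `(X,r)` of order `n`
with cyclic degree `p`, and any group homomorphism `φ : G(X,r) →* Sym(X)` with
`φ(ι(x)) = σ_x`, the order of the permutation group `𝒢 = φ(G)` divides `p^n`;
in particular, if `p` is prime then `𝒢` is a `p`-group. -/
theorem permutation_group_order {X : Type*} [Fintype X] (r : X × X → X × X)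
    (hnd : Nondegenerate r) (hinv : Function.Involutive r) (hbr : IsBraided r)
    (hsf : ∀ x : X, r (x, x) = (x, x)) (p : ℕ) (hp : 0 < p)
    (hpord : ∀ x : X, (sig r x)^[p] = id)
    (hpmin : ∀ q : ℕ, 0 < q → (∀ x : X, (sig r x)^[q] = id) → p ≤ q)
    (φ : YBGroup r →* Equiv.Perm X) (hφ : ∀ x y : X, φ (ybι r x) y = sig r x y) :
    Nat.card φ.range ∣ p ^ Fintype.card X ∧ (p.Prime → IsPGroup p φ.range) :=
  permutation_group_order_general r hinv hsf p hp hpord φ hφ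
end

section
/- Let (X,r) be a square-free solution of finite order |X| = n with cyclic degree p, and let K be a field. Let A = A(K,X,r) be the quotient of the free associative K-algebra on X by the two-sided ideal generated by the elements x·y − σ_x(y)·τ_y(x) for x, y ∈ X. Then for every integer k ≥ 1, the power-sum element Σ_{x ∈ X} x̄^{kp} (where x̄ denotes the image of x in A) lies in the center of A. -/
/-- The defining relation of the Yang–Baxter algebra `A(K,X,r)`:
it identifies `x·y` with `σ_x(y)·τ_y(x)` in the free algebra, so that
`RingQuot` of it is the quotient of the free algebra by the two-sided ideal
generated by the elements `x·y − σ_x(y)·τ_y(x)`. -/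
def ybAlgRel (K : Type*) [CommSemiring K] {X : Type*} (r : X × X → X × X) :
    FreeAlgebra K X → FreeAlgebra K X → Prop := fun a b =>
  ∃ x y : X, a = FreeAlgebra.ι K x * FreeAlgebra.ι K y ∧
    b = FreeAlgebra.ι K (sig r x y) * FreeAlgebra.ι K (tau r y x)

/-- For a finite square-free solution `(X,r)` of order `n`
with cyclic degree `p` and a field `K`, every power-sum element
`Σ_{x ∈ X} x̄^{kp}` (`k ≥ 1`) lies in the center of the Yang–Baxter algebra
`A(K,X,r)`. -/
theorem power_sums_central_in_A {X : Type*} [Fintype X] (r : X × X → X × X)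
    (hnd : Nondegenerate r) (hinv : Function.Involutive r) (hbr : IsBraided r)
    (hsf : ∀ x : X, r (x, x) = (x, x)) (p : ℕ) (hp : 0 < p)
    (hpord : ∀ x : X, (sig r x)^[p] = id)
    (hpmin : ∀ q : ℕ, 0 < q → (∀ x : X, (sig r x)^[q] = id) → p ≤ q)
    (K : Type*) [Field K] :
    ∀ k : ℕ, 1 ≤ k →
      (∑ x : X, (RingQuot.mkAlgHom K (ybAlgRel K r) (FreeAlgebra.ι K x)) ^ (k * p))
        ∈ Subalgebra.center K (RingQuot (ybAlgRel K r)) := by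

  classical
  have hsig_self : ∀ x : X, sig r x x = x := fun x => by
    simp [sig, hsf x]
  have htau_self : ∀ x : X, tau r x x = x := fun x => by
    simp [tau, hsf x]
  have hinv1 : ∀ x y : X, sig r (sig r x y) (tau r y x) = x := by
    intro x y
    show (r (r (x, y))).1 = x
    rw [hinv (x, y)]
  have hybe1 : ∀ x y z : X,
      sig r x (sig r y z) = sig r (sig r x y) (sig r (tau r y x) z) := by
    intro x y z
    have h := congrFun hbr (x, y, z)
    have h1 := congrArg (fun t : X × X × X => t.1) h
    simpa [r12, r23, sig, tau, Function.comp] using h1.symm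
  have hB : ∀ x y : X, sig r y (tau r y x) = x := by
    intro x y
    have h := hybe1 x y (tau r y x)
    rw [hsig_self (tau r y x), hinv1 x y] at h
    apply (hnd.1 x).injective
    rw [h, hsig_self]
  have hcl2 : ∀ x y : X, tau r (sig r x y) x = tau r y x := by
    intro x y
    apply (hnd.1 (sig r x y)).injective
    rw [hinv1 x y]
    exact hB x (sig r x y)
  have hcl2m : ∀ (m : ℕ) (x y : X), tau r ((sig r x)^[m] y) x = tau r y x := by
    intro m
    induction m with
    | zero => intro x y; rfl
    | succ n ih =>
      intro x y
      rw [Function.iterate_succ_apply, ih x (sig r x y), hcl2]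
  set e : X → RingQuot (ybAlgRel K r) :=
    fun x => RingQuot.mkAlgHom K (ybAlgRel K r) (FreeAlgebra.ι K x) with he
  have hrel : ∀ x y : X, e x * e y = e (sig r x y) * e (tau r y x) := by
    intro x y
    have hw : ybAlgRel K r (FreeAlgebra.ι K x * FreeAlgebra.ι K y)
        (FreeAlgebra.ι K (sig r x y) * FreeAlgebra.ι K (tau r y x)) :=
      ⟨x, y, rfl, rfl⟩
    simpa [he, map_mul] using RingQuot.mkAlgHom_rel K hw
  have hpow : ∀ (m : ℕ) (x y : X),
      e x ^ m * e y = e ((sig r x)^[m] y) * (e (tau r y x)) ^ m := by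
    intro m
    induction m with
    | zero => intro x y; simp
    | succ n ih =>
      intro x y
      rw [pow_succ', mul_assoc, ih, ← mul_assoc, hrel, hcl2m n x y,
        ← Function.iterate_succ_apply' (sig r x) n y, mul_assoc, ← pow_succ']
  intro k _
  have hkp : ∀ x y : X, e x ^ (k * p) * e y = e y * (e (tau r y x)) ^ (k * p) := by
    intro x y
    have hit : (sig r x)^[k * p] y = y := by
      rw [mul_comm, Function.iterate_mul, hpord x]
      simp
    rw [hpow, hit]
  rw [Subalgebra.mem_center_iff]
  intro a
  obtain ⟨b, rfl⟩ := RingQuot.mkAlgHom_surjective K (ybAlgRel K r) a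
  have hgen : ∀ y : X,
      e y * (∑ x : X, e x ^ (k * p)) = (∑ x : X, e x ^ (k * p)) * e y := by
    intro y
    rw [Finset.sum_mul, Finset.mul_sum]
    have := Fintype.sum_bijective (tau r y) (hnd.2 y)
      (fun x => e y * (e (tau r y x)) ^ (k * p))
      (fun z => e y * e z ^ (k * p)) (fun x => rfl)
    calc (∑ x : X, e y * e x ^ (k * p))
        = ∑ x : X, e y * (e (tau r y x)) ^ (k * p) := this.symm
      _ = ∑ x : X, e x ^ (k * p) * e y := by
          refine Finset.sum_congr rfl fun x _ => ?_
          rw [hkp]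
  induction b using FreeAlgebra.induction with
  | grade0 c =>
    rw [AlgHom.commutes]
    exact Algebra.commutes c _
  | grade1 x => exact hgen x
  | mul a b ha hb =>
    rw [map_mul, mul_assoc, hb, ← mul_assoc, ha, mul_assoc]
  | add a b ha hb =>
    rw [map_add, add_mul, ha, hb, mul_add]
end
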